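/- arXiv:2205.02868 — 4 statements merged into one kernel-verified Lean document; each statement's English description precedes it below -/
import Mathlib

section
/- Let (X,d) be a complete metric space, let f : X → (−∞,∞] be lower semicontinuous, and let x̄ be a point with f(x̄) finite at which the slope is zero: |∇f|(x̄) = 0. Let M be an identifiable set for f at x̄ and let ε ≥ 0 be strictly less than the modulus of identifiability of M at x̄. Then for any sequence of points x_r → x̄ satisfying f(x_r) → f(x̄), there exists a sequence of points v_r → x̄ with v_r ∈ M for all r, f(v_r) → f(x̄), and f(v_r) + ε·d(v_r, x_r) ≤ f(x_r) for all sufficiently large r. -/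
open Filter Topology
open scoped ENNReal NNReal

/-- The slope `|∇f|(x)`: the infimum of all `δ > 0` such that `x` is a local minimizer of
`f + δ·d(·,x)`; it equals `∞` at points where `f x = ⊤`. -/
noncomputable def slopeM {X : Type*} [MetricSpace X] (f : X → EReal) (x : X) : ℝ≥0∞ :=
  if f x = ⊤ then ⊤
  else sInf {δ : ℝ≥0∞ | ∃ c : ℝ, 0 < c ∧ δ = ENNReal.ofReal c ∧
    ∀ᶠ z in 𝓝 x, f x ≤ f z + ((c * dist z x : ℝ) : EReal)}

/-- The modulus of identifiability: `liminf_{x → xbar, x ∉ M, f(x) → f(xbar)} |∇f|(x)`. -/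
noncomputable def identModulus {X : Type*} [MetricSpace X] (f : X → EReal) (M : Set X)
    (xbar : X) : ℝ≥0∞ :=
  Filter.liminf (slopeM f) (𝓝[Mᶜ] xbar ⊓ Filter.comap f (𝓝 (f xbar)))

/-- `M` is an identifiable set for `f` at `xbar`: it is closed, contains `xbar`, and the
modulus of identifiability is strictly positive. -/
def Identifiable {X : Type*} [MetricSpace X] (f : X → EReal) (M : Set X) (xbar : X) : Prop :=
  IsClosed M ∧ xbar ∈ M ∧ 0 < identModulus f M xbar

/-!
Zero slope at `xbar` makes `f` almost bounded below by `f xbar` on small balls, so Ekeland's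
variational principle, with a constant `c` between `ε` and the modulus of identifiability and on
balls shrinking to `xbar`, moves each `x r` to a point `w r` with
`f (w r) + c * d(w r, x r) ≤ f (x r)` that locally minimizes `f + c * d(·, w r)`, i.e. whose
slope is at most `c`. Then `w r → xbar` and `f (w r) → f xbar`, and a slope below the modulus
forces `w r ∈ M` eventually.
-/

open Metric Set

section Ekeland

variable {X : Type*} [MetricSpace X]

theorem Metric.exists_iInter_eq_singleton_of_antitone [CompleteSpace X] {s : ℕ → Set X}
    (hs : ∀ n, IsClosed (s n)) (hanti : Antitone s) (hne : ∀ n, (s n).Nonempty)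
    (hbdd : ∀ n, Bornology.IsBounded (s n)) (hdiam : Tendsto (fun n => diam (s n)) atTop (𝓝 0)) :
    ∃ v, ⋂ n, s n = {v} := by
  obtain ⟨v, hv⟩ := nonempty_iInter_of_nonempty_biInter hs hbdd
    (fun N => (hne N).mono (subset_iInter₂ fun _ hn => hanti hn)) hdiam
  refine ⟨v, eq_singleton_iff_unique_mem.2 ⟨hv, fun z hz => ?_⟩⟩
  rw [mem_iInter] at hv hz
  exact dist_le_zero.1 (ge_of_tendsto' hdiam fun n => dist_le_diam_of_mem (hbdd n) (hz n) (hv n))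

/-- Ekeland's point is the intersection of a nested sequence of these sets. -/
def ekelandSet (g : X → ℝ) (c : ℝ) (y : X) : Set X :=
  {z | g z + c * dist z y ≤ g y}

variable {g : X → ℝ} {c : ℝ}

theorem self_mem_ekelandSet (y : X) : y ∈ ekelandSet g c y := by
  simp [ekelandSet]

theorem ekelandSet_subset (hc : 0 ≤ c) {y z : X} (hz : z ∈ ekelandSet g c y) :
    ekelandSet g c z ⊆ ekelandSet g c y := fun w hw => by
  have := mul_le_mul_of_nonneg_left (dist_triangle w z y) hc
  simp only [ekelandSet, mem_ofPred_eq] at hz hw ⊢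
  linarith

theorem isClosed_ekelandSet (hg : LowerSemicontinuous g) (y : X) :
    IsClosed (ekelandSet g c y) :=
  (hg.add (continuous_const.mul (continuous_id.dist continuous_const)).lowerSemicontinuous
    ).isClosed_preimage (g y)

theorem exists_mem_ekelandSet_subset_closedBall (hc : 0 < c) (hg : BddBelow (range g)) (y : X)
    {e : ℝ} (he : 0 < e) :
    ∃ z ∈ ekelandSet g c y, ekelandSet g c z ⊆ closedBall z (e / c) := by
  obtain ⟨_, ⟨z, hz, rfl⟩, hlt⟩ := exists_lt_of_csInf_lt
    (Set.Nonempty.image g ⟨y, self_mem_ekelandSet y⟩) (lt_add_of_pos_right _ he)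
  -- `z` nearly minimizes `g` on `ekelandSet g c y`, which contains `ekelandSet g c z`
  refine ⟨z, hz, fun w hw => ?_⟩
  have hinf : sInf (g '' ekelandSet g c y) ≤ g w :=
    csInf_le (hg.mono (image_subset_range _ _)) ⟨w, ekelandSet_subset hc.le hz hw, rfl⟩
  simp only [ekelandSet, mem_ofPred_eq] at hw
  rw [mem_closedBall, le_div_iff₀ hc]
  linarith

/-- Ekeland's variational principle. -/
theorem exists_le_add_dist_forall_le_add_dist [CompleteSpace X] (hg : LowerSemicontinuous g)
    (hbdd : BddBelow (range g)) (hc : 0 < c) (x₀ : X) :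
    ∃ v, g v + c * dist v x₀ ≤ g x₀ ∧ ∀ z, g v ≤ g z + c * dist z v := by
  choose next hnext_mem hnext_ball using fun (n : ℕ) (y : X) =>
    exists_mem_ekelandSet_subset_closedBall hc hbdd y (Nat.one_div_pos_of_nat (n := n))
  let u : ℕ → X := fun n => Nat.rec x₀ (fun n y => next n y) n
  let s : ℕ → Set X := fun n => ekelandSet g c (u (n + 1))
  have hball : ∀ n, s n ⊆ closedBall (u (n + 1)) (1 / (n + 1) / c) := fun n => hnext_ball n (u n)
  have hdiam : Tendsto (fun n => diam (s n)) atTop (𝓝 0) := by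
    refine squeeze_zero (fun n => diam_nonneg) (fun n => (diam_mono (hball n)
      isBounded_closedBall).trans (diam_closedBall (by positivity))) ?_
    simpa using (tendsto_one_div_add_atTop_nhds_zero_nat.div_const c).const_mul 2
  obtain ⟨v, hv⟩ := exists_iInter_eq_singleton_of_antitone (fun n => isClosed_ekelandSet hg _)
    (antitone_nat_of_succ_le fun n => ekelandSet_subset hc.le (hnext_mem _ _))
    (fun n => ⟨_, self_mem_ekelandSet _⟩) (fun n => isBounded_closedBall.subset (hball n)) hdiam
  have hvs : ∀ n, v ∈ s n := mem_iInter.1 (hv ▸ mem_singleton v)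
  refine ⟨v, ekelandSet_subset hc.le (hnext_mem 0 x₀) (hvs 0), fun z => ?_⟩
  by_contra! hlt
  have hz : z ∈ ⋂ n, s n := mem_iInter.2 fun n => ekelandSet_subset hc.le (hvs n) hlt.le
  rw [hv, mem_singleton_iff] at hz
  subst hz
  simp at hlt

end Ekeland

namespace EReal

noncomputable def clampToReal (a b : ℝ) (t : EReal) : ℝ :=
  (max (min t b) a).toReal

variable {a b : ℝ}

theorem coe_clampToReal (t : EReal) : (clampToReal a b t : EReal) = max (min t b) a :=
  coe_toReal (ne_top_of_le_ne_top (coe_ne_top (max b a)) (max_le_max (min_le_right t b) le_rfl))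
    (ne_bot_of_le_ne_bot (coe_ne_bot a) (le_max_right _ _))

theorem monotone_clampToReal : Monotone (clampToReal a b) := fun s t hst => by
  rw [← EReal.coe_le_coe_iff, coe_clampToReal, coe_clampToReal]
  exact max_le_max (min_le_min hst le_rfl) le_rfl

theorem continuous_clampToReal : Continuous (clampToReal a b) := by
  rw [isEmbedding_coe.continuous_iff]
  simp only [Function.comp_def, coe_clampToReal]
  fun_prop

end EReal

section Slope

variable {X : Type*} [MetricSpace X] {f : X → EReal} {x : X} {c : ℝ}

theorem slopeM_le_ofReal (hfx : f x ≠ ⊤) (hc : 0 < c)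
    (h : ∀ᶠ z in 𝓝 x, f x ≤ f z + ((c * dist z x : ℝ) : EReal)) :
    slopeM f x ≤ ENNReal.ofReal c := by
  rw [slopeM, if_neg hfx]
  exact sInf_le ⟨c, hc, rfl, h⟩

theorem eventually_le_add_of_slopeM_lt (hfx : f x ≠ ⊤) (h : slopeM f x < ENNReal.ofReal c) :
    ∀ᶠ z in 𝓝 x, f x ≤ f z + ((c * dist z x : ℝ) : EReal) := by
  rw [slopeM, if_neg hfx, sInf_lt_iff] at h
  obtain ⟨_, ⟨c₀, -, rfl, hc₀⟩, hlt⟩ := h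
  have hc₀c := (ENNReal.ofReal_lt_ofReal_iff'.1 hlt).1
  filter_upwards [hc₀] with z hz
  exact hz.trans (add_le_add_right (EReal.coe_le_coe_iff.2
    (mul_le_mul_of_nonneg_right hc₀c.le dist_nonneg)) _)

theorem exists_slopeM_le_of_forall_ball_le [CompleteSpace X] (hf : LowerSemicontinuous f)
    {xbar x₀ : X} {B ρ : ℝ} (hc : 0 < c) (hlow : ∀ z ∈ ball xbar ρ, (B : EReal) ≤ f z)
    (hx₀ : dist x₀ xbar < ρ / 2) (hfx₀ : f x₀ ≤ ((B + c * ρ / 2 : ℝ) : EReal)) :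
    ∃ v, dist v xbar < ρ ∧ f v + ((c * dist v x₀ : ℝ) : EReal) ≤ f x₀ ∧
      slopeM f v ≤ ENNReal.ofReal c := by
  have hρ : 0 < ρ := by linarith [dist_nonneg (x := x₀) (y := xbar)]
  set K := B + c * ρ
  -- Ekeland is applied to `f` clamped to `[B, K]`; as `f x₀ < K`, the point it yields is not clamped.
  set h : X → ℝ := fun z => EReal.clampToReal B K (f z)
  have hh : ∀ z, (h z : EReal) = max (min (f z) K) B := fun z => EReal.coe_clampToReal _
  have hhB : ∀ z, B ≤ h z := fun z => EReal.coe_le_coe_iff.1 (hh z ▸ le_max_right _ _)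
  have hh_le : ∀ z ∈ ball xbar ρ, (h z : EReal) ≤ f z := fun z hz =>
    hh z ▸ max_le (min_le_left _ _) (hlow z hz)
  have hhx₀ : (h x₀ : EReal) = f x₀ := by
    rw [hh, min_eq_left (hfx₀.trans (EReal.coe_le_coe_iff.2 (by nlinarith))),
      max_eq_left (hlow x₀ (mem_ball.2 (by linarith)))]
  have hhx₀_le : h x₀ ≤ B + c * ρ / 2 := EReal.coe_le_coe_iff.1 (hhx₀ ▸ hfx₀)
  have hh_lsc : LowerSemicontinuous h :=
    EReal.continuous_clampToReal.comp_lowerSemicontinuous hf EReal.monotone_clampToReal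
  obtain ⟨v, hvx₀, hvmin⟩ := exists_le_add_dist_forall_le_add_dist hh_lsc
    ⟨B, forall_mem_range.2 hhB⟩ hc x₀
  have hvx₀_dist : dist v x₀ ≤ ρ / 2 := by
    have := hhB v
    nlinarith
  have hv_ball : dist v xbar < ρ := by linarith [dist_triangle v x₀ xbar]
  have hv_eq : (h v : EReal) = f v := by
    have hvK : max (min (f v) K) B < K := by
      rw [← hh, EReal.coe_lt_coe_iff]
      nlinarith [dist_nonneg (x := v) (y := x₀)]
    have hfvK : f v < K :=
      (min_lt_iff.1 ((le_max_left _ _).trans_lt hvK)).resolve_right (lt_irrefl _)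
    rw [hh, min_eq_left hfvK.le, max_eq_left (hlow v (mem_ball.2 hv_ball))]
  refine ⟨v, hv_ball, ?_, slopeM_le_ofReal (hv_eq ▸ EReal.coe_ne_top _) hc ?_⟩
  · rw [← hv_eq, ← hhx₀]
    exact_mod_cast hvx₀
  · filter_upwards [isOpen_ball.mem_nhds hv_ball] with z hz
    rw [← hv_eq]
    calc (h v : EReal) ≤ ((h z + c * dist z v : ℝ) : EReal) := EReal.coe_le_coe_iff.2 (hvmin z)
      _ ≤ f z + ((c * dist z v : ℝ) : EReal) := by
        rw [EReal.coe_add]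
        exact add_le_add_left (hh_le z hz) _

end Slope

section Identifiability

variable {X : Type*} [MetricSpace X] {f : X → EReal} {M : Set X} {xbar : X}

theorem eventually_mem_of_slopeM_le {ι : Type*} {l : Filter ι} {c : ℝ}
    (hc : ENNReal.ofReal c < identModulus f M xbar) {w : ι → X} (hw : Tendsto w l (𝓝 xbar))
    (hfw : Tendsto (fun r => f (w r)) l (𝓝 (f xbar)))
    (hslope : ∀ᶠ r in l, slopeM f (w r) ≤ ENNReal.ofReal c) : ∀ᶠ r in l, w r ∈ M := by
  have hsteep : ∀ᶠ z in 𝓝[Mᶜ] xbar ⊓ comap f (𝓝 (f xbar)), ENNReal.ofReal c < slopeM f z :=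
    eventually_lt_of_lt_liminf hc
  by_contra hfreq
  let l' := l ⊓ 𝓟 {r | w r ∉ M}
  have : l'.NeBot := frequently_iff_neBot.1 (not_eventually.1 hfreq)
  have hw' : Tendsto w l' (𝓝[Mᶜ] xbar ⊓ comap f (𝓝 (f xbar))) :=
    tendsto_inf.2 ⟨tendsto_nhdsWithin_iff.2 ⟨hw.mono_left inf_le_left,
      mem_inf_of_right (mem_principal_self _)⟩, tendsto_comap_iff.2 (hfw.mono_left inf_le_left)⟩
  obtain ⟨r, hgt, hle⟩ := ((hw'.eventually hsteep).and (hslope.filter_mono inf_le_left)).exists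
  exact (hgt.trans_le hle).false

theorem exists_tendsto_slopeM_le [CompleteSpace X] (hf : LowerSemicontinuous f)
    (hbot : f xbar ≠ ⊥) (hfin : f xbar ≠ ⊤) (hslope : slopeM f xbar = 0) {c : ℝ} (hc : 0 < c)
    {x : ℕ → X} (hx : Tendsto x atTop (𝓝 xbar))
    (hfx : Tendsto (fun r => f (x r)) atTop (𝓝 (f xbar))) :
    ∃ w : ℕ → X, Tendsto w atTop (𝓝 xbar) ∧ Tendsto (fun r => f (w r)) atTop (𝓝 (f xbar)) ∧
      ∀ᶠ r in atTop, slopeM f (w r) ≤ ENNReal.ofReal c ∧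
        f (w r) + ((c * dist (w r) (x r) : ℝ) : EReal) ≤ f (x r) := by
  obtain ⟨A, hA⟩ : ∃ A : ℝ, f xbar = A := ⟨_, (EReal.coe_toReal hfin hbot).symm⟩
  obtain ⟨ρ₀, hρ₀, hnear⟩ := Metric.eventually_nhds_iff.1 (eventually_le_add_of_slopeM_lt hfin
    (hslope ▸ ENNReal.ofReal_pos.2 (by positivity) : slopeM f xbar < ENNReal.ofReal (c / 4)))
  have hlow : ∀ ρ ≤ ρ₀, ∀ z ∈ ball xbar ρ, ((A - c * ρ / 4 : ℝ) : EReal) ≤ f z := by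
    intro ρ hρ z hz
    rw [mem_ball] at hz
    have hle : (A : EReal) ≤ f z + ((c * ρ / 4 : ℝ) : EReal) := hA ▸ (hnear (hz.trans_le hρ)).trans
      (add_le_add_right (EReal.coe_le_coe_iff.2 (by nlinarith)) _)
    rwa [EReal.coe_sub, EReal.sub_le_iff_le_add (.inl (EReal.coe_ne_bot _))
      (.inl (EReal.coe_ne_top _))]
  -- the radius dominates both the distance from `x r` to `xbar` and the excess of `f (x r)` over `A`
  set ρ : ℕ → ℝ := fun r => 2 * dist (x r) xbar + 4 / c * |(f (x r)).toReal - A| + 1 / (r + 1)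
  have hρ_tendsto : Tendsto ρ atTop (𝓝 0) := by
    have hd := tendsto_iff_dist_tendsto_zero.1 hx
    have hs : Tendsto (fun r => (f (x r)).toReal) atTop (𝓝 A) := by
      simpa [hA, Function.comp_def] using (EReal.tendsto_toReal hfin hbot).comp hfx
    simpa [ρ] using ((hd.const_mul 2).add ((hs.sub_const A).abs.const_mul (4 / c))).add
      tendsto_one_div_add_atTop_nhds_zero_nat
  have hex : ∀ᶠ r in atTop, ∃ w, dist w xbar < ρ r ∧ ((A - c * ρ r / 4 : ℝ) : EReal) ≤ f w ∧
      slopeM f w ≤ ENNReal.ofReal c ∧ f w + ((c * dist w (x r) : ℝ) : EReal) ≤ f (x r) := by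
    filter_upwards [hρ_tendsto.eventually (ge_mem_nhds hρ₀),
      hfx.eventually (eventually_ne_nhds (hA ▸ EReal.coe_ne_top A)),
      hfx.eventually (eventually_ne_nhds (hA ▸ EReal.coe_ne_bot A))] with r hr htop hbot_r
    set s := (f (x r)).toReal
    have hρr : c * ρ r / 4 = c / 2 * dist (x r) xbar + |s - A| + c / (4 * (r + 1)) := by
      simp only [ρ]; field_simp; ring
    have hgap : 0 < 4 / c * |s - A| + 1 / (r + 1) := by positivity
    obtain ⟨w, hw, hwx, hws⟩ := exists_slopeM_le_of_forall_ball_le hf hc (hlow _ hr) (x₀ := x r)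
      (by simp only [ρ]; linarith) (by
        rw [← EReal.coe_toReal htop hbot_r, EReal.coe_le_coe_iff]
        have : 0 ≤ c / 2 * dist (x r) xbar + c / (4 * (r + 1)) := by positivity
        linarith [le_abs_self (s - A)])
    exact ⟨w, hw, hlow _ hr w hw, hws, hwx⟩
  obtain ⟨w, hw⟩ := hex.choice
  refine ⟨w, ?_, ?_, hw.mono fun r h => h.2.2⟩
  · exact tendsto_iff_dist_tendsto_zero.2 (squeeze_zero' (.of_forall fun _ => dist_nonneg)
      (hw.mono fun r h => h.1.le) hρ_tendsto)
  · have hlim : Tendsto (fun r => ((A - c * ρ r / 4 : ℝ) : EReal)) atTop (𝓝 (f xbar)) := by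
      rw [hA]
      exact EReal.tendsto_coe.2 (by simpa using ((hρ_tendsto.const_mul c).div_const 4).const_sub A)
    refine tendsto_of_tendsto_of_tendsto_of_le_of_le' hlim hfx (hw.mono fun r h => h.2.1)
      (hw.mono fun r h => ?_)
    exact (le_add_of_nonneg_right (EReal.coe_nonneg.2 (by positivity))).trans h.2.2.2

end Identifiability

theorem linear_growth_general {X : Type*} [MetricSpace X] [CompleteSpace X]
    (f : X → EReal) (hlsc : LowerSemicontinuous f) (hbot : ∀ z, f z ≠ ⊥)
    (xbar : X) (hfin : f xbar ≠ ⊤) (hslope : slopeM f xbar = 0)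
    (M : Set X) (hM : Identifiable f M xbar)
    (ε : ℝ) (hεlt : ENNReal.ofReal ε < identModulus f M xbar)
    (x : ℕ → X) (hx : Tendsto x atTop (𝓝 xbar))
    (hfx : Tendsto (fun r => f (x r)) atTop (𝓝 (f xbar))) :
    ∃ v : ℕ → X, Tendsto v atTop (𝓝 xbar) ∧ (∀ r, v r ∈ M) ∧
      Tendsto (fun r => f (v r)) atTop (𝓝 (f xbar)) ∧
      ∀ᶠ r in atTop, f (v r) + ((ε * dist (v r) (x r) : ℝ) : EReal) ≤ f (x r) := by
  classical
  obtain ⟨c, -, hεc, hcM⟩ := ENNReal.lt_iff_exists_real_btwn.1 hεlt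
  obtain ⟨hεc, hc⟩ := ENNReal.ofReal_lt_ofReal_iff'.1 hεc
  obtain ⟨w, hw, hfw, hwev⟩ := exists_tendsto_slopeM_le hlsc (hbot xbar) hfin hslope hc hx hfx
  have hwM := eventually_mem_of_slopeM_le hcM hw hfw (hwev.mono fun _ h => h.1)
  -- the finitely many `w r` outside `M` are replaced by `xbar`
  set v : ℕ → X := fun r => if w r ∈ M then w r else xbar
  have hvw : v =ᶠ[atTop] w := hwM.mono fun _ h => if_pos h
  refine ⟨v, hw.congr' hvw.symm, fun r => ?_, hfw.congr' (hvw.fun_comp f).symm, ?_⟩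
  · by_cases h : w r ∈ M <;> simp [v, h, hM.2.1]
  · filter_upwards [hvw, hwev] with r hvr hr
    rw [hvr]
    exact (add_le_add_right (EReal.coe_le_coe_iff.2
      (mul_le_mul_of_nonneg_right hεc.le dist_nonneg)) _).trans hr.2

/-- Linear growth theorem. -/
theorem linear_growth {X : Type*} [MetricSpace X] [CompleteSpace X]
    (f : X → EReal) (hlsc : LowerSemicontinuous f) (hbot : ∀ z, f z ≠ ⊥)
    (xbar : X) (hfin : f xbar ≠ ⊤) (hslope : slopeM f xbar = 0)
    (M : Set X) (hM : Identifiable f M xbar)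
    (ε : ℝ) (hε : 0 ≤ ε) (hεlt : ENNReal.ofReal ε < identModulus f M xbar)
    (x : ℕ → X) (hx : Tendsto x atTop (𝓝 xbar))
    (hfx : Tendsto (fun r => f (x r)) atTop (𝓝 (f xbar))) :
    ∃ v : ℕ → X, Tendsto v atTop (𝓝 xbar) ∧ (∀ r, v r ∈ M) ∧
      Tendsto (fun r => f (v r)) atTop (𝓝 (f xbar)) ∧
      ∀ᶠ r in atTop, f (v r) + ((ε * dist (v r) (x r) : ℝ) : EReal) ≤ f (x r) :=
  linear_growth_general f hlsc hbot xbar hfin hslope M hM ε hεlt x hx hfx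
end

section
/- Let (X,d) be a complete metric space, f : X → (−∞,∞] a lower semicontinuous function, and ᾱ a constant such that the point x̄ (with f(x̄) finite) minimizes the function f + ᾱ·d(·,x̄)² over X. Suppose a sequence of points x_r → x̄ satisfies f(x_r) → f(x̄), and fix any constant α > ᾱ. Then any sequence of points (y_r) such that y_r minimizes f + α·d(·,x_r)² over X for each r is a critical sequence: y_r → x̄, f(y_r) → f(x̄), and |∇f|(y_r) → 0. Consequently, if M is an identifiable set for f at x̄, then y_r ∈ M for all sufficiently large r. -/
open Filter Topology
open scoped ENNReal NNReal

set_option maxHeartbeats 1000000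

/-- Proximal sequences are critical, and eventually lie in any identifiable set. -/
theorem proximal_sequences_critical {X : Type*} [MetricSpace X] [CompleteSpace X]
    (f : X → EReal) (hlsc : LowerSemicontinuous f) (hbot : ∀ z, f z ≠ ⊥)
    (xbar : X) (hfin : f xbar ≠ ⊤) (abar : ℝ)
    (hmin : ∀ z : X, f xbar ≤ f z + ((abar * dist z xbar ^ 2 : ℝ) : EReal))
    (x : ℕ → X) (hx : Tendsto x atTop (𝓝 xbar))
    (hfx : Tendsto (fun r => f (x r)) atTop (𝓝 (f xbar)))
    (α : ℝ) (hα : abar < α) (y : ℕ → X)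
    (hy : ∀ r, ∀ z : X, f (y r) + ((α * dist (y r) (x r) ^ 2 : ℝ) : EReal)
      ≤ f z + ((α * dist z (x r) ^ 2 : ℝ) : EReal)) :
    Tendsto y atTop (𝓝 xbar) ∧
    Tendsto (fun r => f (y r)) atTop (𝓝 (f xbar)) ∧
    Tendsto (fun r => slopeM f (y r)) atTop (𝓝 0) ∧
    ∀ M : Set X, Identifiable f M xbar → ∀ᶠ r in atTop, y r ∈ M := by
  set b : ℝ := (f xbar).toReal with hb
  have hfxb : f xbar = (b : EReal) := (EReal.coe_toReal hfin (hbot xbar)).symm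
  have hevT : ∀ᶠ r in atTop, f (x r) ≠ ⊤ := by
    have h := hfx.eventually (gt_mem_nhds (lt_top_iff_ne_top.2 hfin))
    exact h.mono fun r hr => hr.ne
  set fxr : ℕ → ℝ := fun r => (f (x r)).toReal with hfxrdef
  have hfxr : Tendsto fxr atTop (𝓝 b) := (EReal.tendsto_toReal hfin (hbot xbar)).comp hfx
  set t : ℕ → ℝ := fun r => dist (y r) (x r) with htdef
  set ε : ℕ → ℝ := fun r => dist (x r) xbar with hεdef
  have hε : Tendsto ε atTop (𝓝 0) := tendsto_iff_dist_tendsto_zero.1 hx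
  set fy : ℕ → ℝ := fun r => (f (y r)).toReal with hfydef
  have key : ∀ r, f (x r) ≠ ⊤ → f (y r) ≠ ⊤ ∧
      fy r + α * t r ^ 2 ≤ fxr r ∧
      b ≤ fy r + abar * dist (y r) xbar ^ 2 := by
    intro r hT
    have h1 : f (y r) + ((α * t r ^ 2 : ℝ) : EReal) ≤ f (x r) := by
      have := hy r (x r)
      simpa using this
    have hyT : f (y r) ≠ ⊤ := by
      intro h
      rw [h, EReal.top_add_coe] at h1
      exact hT (top_le_iff.1 h1)
    have hy1 : ((fy r : ℝ) : EReal) = f (y r) := EReal.coe_toReal hyT (hbot _)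
    have hx1 : ((fxr r : ℝ) : EReal) = f (x r) := EReal.coe_toReal hT (hbot _)
    refine ⟨hyT, ?_, ?_⟩
    · rw [← hy1, ← hx1, ← EReal.coe_add, EReal.coe_le_coe_iff] at h1
      exact h1
    · have h2 := hmin (y r)
      rw [hfxb, ← hy1, ← EReal.coe_add, EReal.coe_le_coe_iff] at h2
      exact h2
  have hevyT : ∀ᶠ r in atTop, f (y r) ≠ ⊤ := hevT.mono fun r h => (key r h).1
  have hevA : ∀ᶠ r in atTop, fy r + α * t r ^ 2 ≤ fxr r := hevT.mono fun r h => (key r h).2.1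
  have hevB : ∀ᶠ r in atTop, b ≤ fy r + abar * dist (y r) xbar ^ 2 :=
    hevT.mono fun r h => (key r h).2.2
  set K : ℝ := α - abar with hKdef
  have hK : 0 < K := sub_pos.2 hα
  set A : ℝ := |abar| with hAdef
  have hA0 : 0 ≤ A := abs_nonneg abar
  have hδ : Tendsto (fun r => fxr r - b) atTop (𝓝 0) := by
    simpa using hfxr.sub (tendsto_const_nhds : Tendsto (fun _ : ℕ => b) atTop (𝓝 b))
  -- quadratic bound
  have hq : ∀ᶠ r in atTop, K * t r ^ 2 ≤ (fxr r - b) + A * (2 * t r * ε r + ε r ^ 2) := by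
    filter_upwards [hevA, hevB] with r h1 h2
    set d : ℝ := dist (y r) xbar with hddef
    have htri1 : d ≤ t r + ε r := dist_triangle (y r) (x r) xbar
    have habs : |d - t r| ≤ ε r := by
      have := abs_dist_sub_le xbar (x r) (y r)
      rw [dist_comm xbar (y r), dist_comm (x r) (y r), dist_comm xbar (x r)] at this
      simpa [hddef, htdef, hεdef] using this
    have habs2 : |abar * (d - t r)| ≤ A * ε r := by
      rw [abs_mul]
      exact mul_le_mul_of_nonneg_left habs (abs_nonneg abar)
    have e2 : abar * (d - t r) ≤ A * ε r := (abs_le.1 habs2).2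
    have hdt : (0:ℝ) ≤ d + t r := add_nonneg dist_nonneg dist_nonneg
    have e3 : abar * (d - t r) * (d + t r) ≤ A * ε r * (d + t r) :=
      mul_le_mul_of_nonneg_right e2 hdt
    have hε0 : (0:ℝ) ≤ ε r := dist_nonneg
    nlinarith [mul_nonneg (mul_nonneg hA0 hε0) (sub_nonneg.2 htri1)]
  have ht0 : Tendsto t atTop (𝓝 0) := by
    rw [Metric.tendsto_nhds]
    intro η hη
    have hc1 : (0:ℝ) < K * η ^ 2 / 8 := by positivity
    have hc2 : (0:ℝ) < K * η / (8 * (A + 1)) := by positivity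
    filter_upwards [hq, hδ.eventually (gt_mem_nhds hc1), hε.eventually (gt_mem_nhds hη),
      hε.eventually (gt_mem_nhds hc2)] with r h1 h2 h3 h4
    rw [Real.dist_eq, sub_zero, abs_of_nonneg (dist_nonneg : (0:ℝ) ≤ t r)]
    by_contra hcon
    push_neg at hcon
    have ht0' : (0:ℝ) ≤ t r := dist_nonneg
    have hε0 : (0:ℝ) ≤ ε r := dist_nonneg
    have hA1 : (0:ℝ) < A + 1 := by positivity
    have e1 : (A + 1) * (K * η / (8 * (A + 1))) = K * η / 8 := by field_simp
    have h3' : A * ε r < K * η / 8 := by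
      nlinarith [mul_pos hA1 (sub_pos.2 h4)]
    nlinarith [mul_nonneg (sub_nonneg.2 h3'.le) ht0',
      mul_nonneg (mul_nonneg hK.le ht0') (sub_nonneg.2 hcon),
      mul_nonneg (sub_nonneg.2 h3'.le) hε0,
      mul_nonneg (mul_nonneg hK.le hη.le) (sub_nonneg.2 h3.le),
      mul_nonneg (mul_nonneg hK.le (sub_nonneg.2 hcon)) (add_nonneg ht0' hη.le),
      mul_pos hK (mul_pos hη hη)]
  have hyx0 : Tendsto (fun r => dist (y r) xbar) atTop (𝓝 0) := by
    apply squeeze_zero (fun r => dist_nonneg) (fun r => dist_triangle (y r) (x r) xbar)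
    simpa using ht0.add hε
  have H1 : Tendsto y atTop (𝓝 xbar) := tendsto_iff_dist_tendsto_zero.2 hyx0
  have hfyb : Tendsto fy atTop (𝓝 b) := by
    apply tendsto_of_tendsto_of_tendsto_of_le_of_le'
      (g := fun r => b - abar * dist (y r) xbar ^ 2) (h := fun r => fxr r - α * t r ^ 2)
    · have : Tendsto (fun r => abar * dist (y r) xbar ^ 2) atTop (𝓝 0) := by
        simpa using (tendsto_const_nhds : Tendsto (fun _ : ℕ => abar) atTop (𝓝 abar)).mul
          (hyx0.pow 2)
      simpa using (tendsto_const_nhds : Tendsto (fun _ : ℕ => b) atTop (𝓝 b)).sub this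
    · have : Tendsto (fun r => α * t r ^ 2) atTop (𝓝 0) := by
        simpa using (tendsto_const_nhds : Tendsto (fun _ : ℕ => α) atTop (𝓝 α)).mul (ht0.pow 2)
      simpa using hfxr.sub this
    · filter_upwards [hevB] with r h; linarith
    · filter_upwards [hevA] with r h; linarith
  have H2 : Tendsto (fun r => f (y r)) atTop (𝓝 (f xbar)) := by
    rw [hfxb]
    apply (EReal.tendsto_coe.2 hfyb).congr'
    filter_upwards [hevyT] with r hT
    exact EReal.coe_toReal hT (hbot _)
  have H3 : Tendsto (fun r => slopeM f (y r)) atTop (𝓝 0) := by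
    rw [ENNReal.tendsto_nhds_zero]
    intro εE hεE
    set c : ℝ := if h : εE = ⊤ then 1 else εE.toReal with hc
    have hc0 : 0 < c := by
      rw [hc]; split_ifs with h
      · norm_num
      · exact ENNReal.toReal_pos hεE.ne' h
    have hcε : ENNReal.ofReal c ≤ εE := by
      rw [hc]; split_ifs with h
      · simp [h]
      · rw [ENNReal.ofReal_toReal h]
    have hAα : (0:ℝ) ≤ |α| := abs_nonneg α
    have hbound : ∀ᶠ r in atTop, 2 * |α| * t r ≤ c / 2 := by
      have hpos : (0:ℝ) < c / (8 * (|α| + 1)) := by positivity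
      filter_upwards [ht0.eventually (gt_mem_nhds hpos)] with r h
      have ht0' : (0:ℝ) ≤ t r := dist_nonneg
      have hα1 : (0:ℝ) < |α| + 1 := by positivity
      have e1 : (|α| + 1) * (c / (8 * (|α| + 1))) = c / 8 := by field_simp
      nlinarith [mul_pos hα1 (sub_pos.2 h)]
    filter_upwards [hbound, hevT] with r hcr hT
    obtain ⟨hyT, -, -⟩ := key r hT
    rw [slopeM, if_neg hyT]
    refine le_trans (sInf_le ?_) hcε
    refine ⟨c, hc0, rfl, ?_⟩
    rw [Metric.eventually_nhds_iff]
    refine ⟨c / (2 * (|α| + 1)), by positivity, fun z hz => ?_⟩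
    by_cases hzT : f z = ⊤
    · rw [hzT, EReal.top_add_coe]; exact le_top
    · have h1 := hy r z
      have hy1 : ((fy r : ℝ) : EReal) = f (y r) := EReal.coe_toReal hyT (hbot _)
      have hz1 : (((f z).toReal : ℝ) : EReal) = f z := EReal.coe_toReal hzT (hbot _)
      rw [← hy1, ← hz1, ← EReal.coe_add, ← EReal.coe_add, EReal.coe_le_coe_iff] at h1
      rw [← hy1, ← hz1, ← EReal.coe_add, EReal.coe_le_coe_iff]
      set fz : ℝ := (f z).toReal
      set dz : ℝ := dist z (x r) with hdzdef
      set dzy : ℝ := dist z (y r) with hdzydef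
      have habs : |dz - t r| ≤ dzy := by
        have := abs_dist_sub_le z (y r) (x r)
        simpa [hdzdef, htdef, hdzydef] using this
      have habs2 : |α * (dz - t r)| ≤ |α| * dzy := by
        rw [abs_mul]
        exact mul_le_mul_of_nonneg_left habs (abs_nonneg α)
      have e2 : α * (dz - t r) ≤ |α| * dzy := (abs_le.1 habs2).2
      have hdt : (0:ℝ) ≤ dz + t r := add_nonneg dist_nonneg dist_nonneg
      have e3 : α * (dz - t r) * (dz + t r) ≤ |α| * dzy * (dz + t r) :=
        mul_le_mul_of_nonneg_right e2 hdt
      have htri1 : dz ≤ t r + dzy := by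
        have := dist_triangle z (y r) (x r)
        simpa [hdzdef, htdef, hdzydef, add_comm] using this
      have hdzy0 : (0:ℝ) ≤ dzy := dist_nonneg
      have hα1 : (0:ℝ) < |α| + 1 := by positivity
      have hαη : |α| * (c / (2 * (|α| + 1))) ≤ c / 2 := by
        rw [← mul_div_assoc, div_le_div_iff₀ (by positivity) (by norm_num : (0:ℝ) < 2)]
        nlinarith
      nlinarith [mul_nonneg (mul_nonneg hAα hdzy0) (sub_nonneg.2 htri1),
        mul_nonneg (sub_nonneg.2 hcr) hdzy0,
        mul_nonneg (mul_nonneg hAα hdzy0) (sub_nonneg.2 hz.le),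
        mul_nonneg (sub_nonneg.2 hαη) hdzy0]
  refine ⟨H1, H2, H3, ?_⟩
  intro M hM
  by_contra hcon
  rw [Filter.not_eventually] at hcon
  have hF : (atTop ⊓ 𝓟 {r | ¬ y r ∈ M}).NeBot := frequently_iff_neBot.1 hcon
  obtain ⟨hMclosed, hMmem, hMpos⟩ := hM
  rw [identModulus, liminf_eq] at hMpos
  obtain ⟨a, haS, ha0⟩ := lt_sSup_iff.1 hMpos
  have hyL : Tendsto y (atTop ⊓ 𝓟 {r | ¬ y r ∈ M})
      (𝓝[Mᶜ] xbar ⊓ Filter.comap f (𝓝 (f xbar))) := by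
    refine tendsto_inf.2 ⟨?_, tendsto_comap_iff.2 ?_⟩
    · rw [nhdsWithin]
      refine tendsto_inf.2 ⟨H1.mono_left inf_le_left, tendsto_principal.2 ?_⟩
      exact eventually_inf_principal.2 (Filter.Eventually.of_forall fun r h => h)
    · exact H2.mono_left inf_le_left
  have h4 : ∀ᶠ r in atTop ⊓ 𝓟 {r | ¬ y r ∈ M}, a ≤ slopeM f (y r) := hyL.eventually haS
  have h5 : ∀ᶠ r in atTop ⊓ 𝓟 {r | ¬ y r ∈ M}, slopeM f (y r) < a :=
    (H3.eventually (gt_mem_nhds ha0)).filter_mono inf_le_left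
  obtain ⟨r, h4r, h5r⟩ := (h4.and h5).exists
  exact absurd h4r (not_le.2 h5r)
end

section
/- Let f : ℝⁿ → (−∞,∞] be a proper lower semicontinuous function and x̄ a point with f(x̄) finite. Then a closed set M containing x̄ is identifiable for f at x̄ (in the slope sense) if and only if there exists no sequence of points (x_r) lying outside M converging to x̄ with f(x_r) → f(x̄) and with limiting subgradients y_r ∈ ∂f(x_r) converging to zero. -/
/-!
A regular subgradient `y` at `x` bounds the slope: `|∇f|(x) ≤ ‖y‖`. Conversely, if `|∇f|(z) < c`
then `f + c ‖· - z‖` is locally minimal at `z`, so a minimizer `w` of the lower semicontinuous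
`f + (c / η) ‖· - z‖²` over a small ball around `z` lies within `η` of `z`, has `f`-value within
`c η` of `f z`, and carries the proximal, hence regular, subgradient `2 (c / η) (z - w)`, of norm
at most `2 c`. Limiting subgradients are in turn `f`-attentive limits of regular ones. So, near
`x̄` and off `M`, points of small slope and points with small regular or limiting subgradients are
`f`-attentive limits of one another, and a diagonal argument in the graph of `f` shows that
either all of them accumulate at `x̄` in the `f`-attentive sense or none does.
-/

open Filter Topology
open scoped ENNReal NNReal

/-- `y` is a regular (Fréchet) subgradient of `f` at `x`:
`liminf_{z → x} (f(z) − f(x) − ⟨y, z − x⟩)/‖z − x‖ ≥ 0`. -/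
def RegularSubgradient {n : ℕ} (f : EuclideanSpace ℝ (Fin n) → EReal)
    (x y : EuclideanSpace ℝ (Fin n)) : Prop :=
  f x ≠ ⊤ ∧ ∀ ε : ℝ, 0 < ε →
    ∀ᶠ z in 𝓝 x, f x + (((inner ℝ y (z - x) : ℝ) - ε * ‖z - x‖ : ℝ) : EReal) ≤ f z

/-- The limiting subdifferential `∂f(x)`: all limits of regular subgradients `y_r` at points
`x_r → x` with `f(x_r) → f(x)`. -/
def LimitingSubdiff {n : ℕ} (f : EuclideanSpace ℝ (Fin n) → EReal)
    (x : EuclideanSpace ℝ (Fin n)) : Set (EuclideanSpace ℝ (Fin n)) :=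
  {y | f x ≠ ⊤ ∧ ∃ xr yr : ℕ → EuclideanSpace ℝ (Fin n),
    (∀ r, RegularSubgradient f (xr r) (yr r)) ∧
    Tendsto xr atTop (𝓝 x) ∧ Tendsto (fun r => f (xr r)) atTop (𝓝 (f x)) ∧
    Tendsto yr atTop (𝓝 y)}

/-- `f` is primal lower nice at `xbar`. -/
def PrimalLowerNice {n : ℕ} (f : EuclideanSpace ℝ (Fin n) → EReal)
    (xbar : EuclideanSpace ℝ (Fin n)) : Prop :=
  ∃ (α β : ℝ) (U : Set (EuclideanSpace ℝ (Fin n))), U ∈ 𝓝 xbar ∧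
    ∀ x ∈ U, ∀ x' ∈ U, ∀ y ∈ LimitingSubdiff f x,
      f x + (((inner ℝ y (x' - x) : ℝ) - (α + β * ‖y‖) * ‖x' - x‖ ^ 2 : ℝ) : EReal) ≤ f x'

section Attentive

variable {X Y : Type*} [TopologicalSpace X] [TopologicalSpace Y]

/-- The filter of Rockafellar–Wets' `f`-attentive convergence. -/
def attentiveNhds (f : X → Y) (x : X) : Filter X :=
  𝓝 x ⊓ comap f (𝓝 (f x))

instance [FirstCountableTopology X] [FirstCountableTopology Y] (f : X → Y) (x : X) :
    (attentiveNhds f x).IsCountablyGenerated := by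
  unfold attentiveNhds
  infer_instance

theorem attentiveNhds_eq_comap (f : X → Y) (x : X) :
    attentiveNhds f x = comap (fun u => (u, f u)) (𝓝 (x, f x)) := by
  rw [attentiveNhds, nhds_prod_eq, prod_eq_inf, comap_inf, comap_comap, comap_comap]
  exact congrArg (· ⊓ _) comap_id.symm

theorem tendsto_attentiveNhds_iff {ι : Type*} {l : Filter ι} {f : X → Y} {x : X} {u : ι → X} :
    Tendsto u l (attentiveNhds f x) ↔
      Tendsto u l (𝓝 x) ∧ Tendsto (fun i => f (u i)) l (𝓝 (f x)) := by
  rw [attentiveNhds, tendsto_inf, tendsto_comap_iff]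
  rfl

theorem Filter.Frequently.of_frequently_attentiveNhds {f : X → Y} {x : X} {p : X → Prop}
    (h : ∃ᶠ u in attentiveNhds f x, ∃ᶠ w in attentiveNhds f u, p w) :
    ∃ᶠ w in attentiveNhds f x, p w := by
  simp only [attentiveNhds_eq_comap, frequently_comap] at h ⊢
  refine frequently_frequently_nhds.1 (h.mono ?_)
  rintro _ ⟨u, rfl, hu⟩
  exact hu

theorem Filter.Frequently.attentiveNhds_inf_principal_of_forall {f : X → Y} {x : X}
    {s : Set X} (hs : IsOpen s) {p q : X → Prop}
    (h : ∃ᶠ u in attentiveNhds f x ⊓ 𝓟 s, p u)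
    (hpq : ∀ u ∈ s, p u → ∃ᶠ w in attentiveNhds f u, q w) :
    ∃ᶠ w in attentiveNhds f x ⊓ 𝓟 s, q w := by
  rw [frequently_inf_principal] at h ⊢
  refine Frequently.of_frequently_attentiveNhds (h.mono fun u ⟨hu, hpu⟩ => ?_)
  have hsu : ∀ᶠ w in attentiveNhds f u, w ∈ s := mem_inf_of_left (hs.mem_nhds hu)
  exact ((hpq u hu hpu).and_eventually hsu).mono fun w ⟨hqw, hw⟩ => ⟨hw, hqw⟩

theorem exists_seq_iff_forall_frequently_attentiveNhds [FirstCountableTopology X]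
    [FirstCountableTopology Y] {Z : Type*} [SeminormedAddCommGroup Z] {f : X → Y} {x : X}
    {s : Set X} {R : X → Z → Prop} :
    (∃ (u : ℕ → X) (y : ℕ → Z), (∀ r, u r ∈ s) ∧ Tendsto u atTop (𝓝 x) ∧
        Tendsto (fun r => f (u r)) atTop (𝓝 (f x)) ∧ (∀ r, R (u r) (y r)) ∧
        Tendsto y atTop (𝓝 0)) ↔
      ∀ ε > 0, ∃ᶠ u in attentiveNhds f x ⊓ 𝓟 s, ∃ y, R u y ∧ ‖y‖ < ε := by
  calc _ ↔ ∃ v : ℕ → X × Z, Tendsto v atTop (attentiveNhds f x ×ˢ 𝓝 0) ∧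
        ∀ r, (v r).1 ∈ s ∧ R (v r).1 (v r).2 := by
        constructor
        · rintro ⟨u, y, hus, hu, hfu, hR, hy⟩
          exact ⟨fun r => (u r, y r),
            tendsto_prod_iff'.2 ⟨tendsto_attentiveNhds_iff.2 ⟨hu, hfu⟩, hy⟩,
            fun r => ⟨hus r, hR r⟩⟩
        · rintro ⟨v, hv, hvR⟩
          obtain ⟨hv₁, hv₂⟩ := tendsto_prod_iff'.1 hv
          exact ⟨fun r => (v r).1, fun r => (v r).2, fun r => (hvR r).1,
            (tendsto_attentiveNhds_iff.1 hv₁).1, (tendsto_attentiveNhds_iff.1 hv₁).2,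
            fun r => (hvR r).2, hv₂⟩
    _ ↔ ∃ᶠ v in attentiveNhds f x ×ˢ 𝓝 0, v.1 ∈ s ∧ R v.1 v.2 :=
        (frequently_iff_seq_forall (p := fun v : X × Z => v.1 ∈ s ∧ R v.1 v.2)).symm
    _ ↔ _ := by
        simp only [((attentiveNhds f x).basis_sets.prod Metric.nhds_basis_ball).frequently_iff,
          frequently_inf_principal, (attentiveNhds f x).basis_sets.frequently_iff]
        refine ⟨fun h ε hε U hU => ?_, fun h ⟨U, ε⟩ ⟨hU, hε⟩ => ?_⟩
        · obtain ⟨⟨u, y⟩, ⟨hu, hy⟩, hus, hR⟩ := h (U, ε) ⟨hU, hε⟩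
          exact ⟨u, hu, hus, y, hR, mem_ball_zero_iff.1 hy⟩
        · obtain ⟨u, hu, hus, y, hR, hy⟩ := h ε hε U hU
          exact ⟨(u, y), ⟨hu, mem_ball_zero_iff.2 hy⟩, hus, hR⟩

end Attentive

theorem ENNReal.liminf_eq_zero_iff {α : Type*} {l : Filter α} {g : α → ℝ≥0∞} :
    liminf g l = 0 ↔ ∀ ε > 0, ∃ᶠ a in l, g a < ENNReal.ofReal ε := by
  rw [← nonpos_iff_eq_zero, liminf_le_iff]
  refine ⟨fun h ε hε => h _ (ENNReal.ofReal_pos.2 hε), fun h δ hδ => ?_⟩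
  obtain ⟨ε, -, hε, hεδ⟩ := ENNReal.lt_iff_exists_real_btwn.1 hδ
  exact (h ε (ENNReal.ofReal_pos.1 hε)).mono fun a ha => ha.trans hεδ

section Subgradients

variable {n : ℕ} {f : EuclideanSpace ℝ (Fin n) → EReal}

theorem slopeM_le_of_regularSubgradient {x y : EuclideanSpace ℝ (Fin n)}
    (h : RegularSubgradient f x y) : slopeM f x ≤ ENNReal.ofReal ‖y‖ := by
  refine ENNReal.le_of_forall_pos_le_add fun ε hε _ => ?_
  rw [← ENNReal.ofReal_coe_nnreal, ← ENNReal.ofReal_add (norm_nonneg _) ε.coe_nonneg, slopeM,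
    if_neg h.1]
  refine sInf_le ⟨‖y‖ + ε, by positivity, rfl, ?_⟩
  filter_upwards [h.2 ε hε] with z hz
  rw [dist_eq_norm]
  set t := (‖y‖ + ε) * ‖z - x‖
  have hlower : -t ≤ inner ℝ y (z - x) - ε * ‖z - x‖ := by
    nlinarith [neg_abs_le (inner ℝ y (z - x)), abs_real_inner_le_norm y (z - x)]
  calc f x ≤ f x + ((inner ℝ y (z - x) - ε * ‖z - x‖ + t : ℝ) : EReal) :=
        le_add_of_nonneg_right (EReal.coe_nonneg.2 (by linarith))
    _ = f x + ((inner ℝ y (z - x) - ε * ‖z - x‖ : ℝ) : EReal) + (t : EReal) := by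
        rw [EReal.coe_add, add_assoc]
    _ ≤ f z + (t : EReal) := by gcongr

theorem regularSubgradient_mem_limitingSubdiff {x y : EuclideanSpace ℝ (Fin n)}
    (h : RegularSubgradient f x y) : y ∈ LimitingSubdiff f x :=
  ⟨h.1, fun _ => x, fun _ => y, fun _ => h, tendsto_const_nhds, tendsto_const_nhds,
    tendsto_const_nhds⟩

theorem frequently_regularSubgradient_of_mem_limitingSubdiff {x y : EuclideanSpace ℝ (Fin n)}
    (h : y ∈ LimitingSubdiff f x) {V : Set (EuclideanSpace ℝ (Fin n))} (hV : V ∈ 𝓝 y) :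
    ∃ᶠ w in attentiveNhds f x, ∃ y' ∈ V, RegularSubgradient f w y' := by
  obtain ⟨-, xr, yr, hreg, hx, hfx, hy⟩ := h
  exact (tendsto_attentiveNhds_iff.2 ⟨hx, hfx⟩).frequently
    ((hy.eventually_mem hV).mono fun k hk => ⟨yr k, hk, hreg k⟩).frequently

theorem regularSubgradient_of_isLocalMin_add_sq {w z : EuclideanSpace ℝ (Fin n)} {K : ℝ}
    (hw : f w ≠ ⊤) (hmin : IsLocalMin (fun u => f u + ((K * ‖u - z‖ ^ 2 : ℝ) : EReal)) w) :
    RegularSubgradient f w ((2 * K) • (z - w)) := by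
  refine ⟨hw, fun ε hε => ?_⟩
  filter_upwards [hmin, Metric.ball_mem_nhds w (show 0 < ε / (|K| + 1) by positivity)]
    with u hu hball
  rw [mem_ball_iff_norm, lt_div_iff₀ (by positivity)] at hball
  have hsq : ‖u - z‖ ^ 2 = ‖u - w‖ ^ 2 + 2 * inner ℝ (u - w) (w - z) + ‖w - z‖ ^ 2 := by
    rw [← norm_add_sq_real, sub_add_sub_cancel]
  have hinner : inner ℝ ((2 * K) • (z - w)) (u - w) = -(2 * K * inner ℝ (u - w) (w - z)) := by
    rw [real_inner_smul_left, ← neg_sub w z, inner_neg_left, real_inner_comm]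
    ring
  have hquad : K * ‖u - w‖ ^ 2 ≤ ε * ‖u - w‖ := by
    nlinarith [le_abs_self K, abs_nonneg K, norm_nonneg (u - w)]
  have key : inner ℝ ((2 * K) • (z - w)) (u - w) - ε * ‖u - w‖ ≤
      K * ‖w - z‖ ^ 2 - K * ‖u - z‖ ^ 2 := by
    rw [hinner, hsq]
    linarith
  calc f w + ((inner ℝ ((2 * K) • (z - w)) (u - w) - ε * ‖u - w‖ : ℝ) : EReal)
      ≤ f w + ((K * ‖w - z‖ ^ 2 - K * ‖u - z‖ ^ 2 : ℝ) : EReal) := by gcongr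
    _ = f w + ((K * ‖w - z‖ ^ 2 : ℝ) : EReal) - ((K * ‖u - z‖ ^ 2 : ℝ) : EReal) := by
        rw [EReal.coe_sub, add_sub_assoc]
    _ ≤ f u := (EReal.sub_le_iff_le_add (Or.inl (EReal.coe_ne_bot _))
        (Or.inl (EReal.coe_ne_top _))).2 hu

theorem exists_regularSubgradient_near (hlsc : LowerSemicontinuous f)
    {z : EuclideanSpace ℝ (Fin n)} {a c η ρ : ℝ} (hfz : f z = a) (hc : 0 < c) (hη : 0 < η)
    (hηρ : η < ρ) (hloc : ∀ u ∈ Metric.closedBall z ρ, f z ≤ f u + ((c * dist u z : ℝ) : EReal)) :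
    ∃ w y, ∃ b : ℝ, f w = b ∧ dist w z ≤ η ∧ b ≤ a ∧ a ≤ b + c * η ∧ ‖y‖ ≤ 2 * c ∧
      RegularSubgradient f w y := by
  set K := c / η
  have hK : 0 < K := div_pos hc hη
  have hKη : K * η = c := div_mul_cancel₀ c hη.ne'
  set g := fun u => f u + ((K * ‖u - z‖ ^ 2 : ℝ) : EReal)
  have hg : LowerSemicontinuous g :=
    hlsc.add' (continuous_coe_real_ereal.comp (by fun_prop)).lowerSemicontinuous fun _ =>
      EReal.continuousAt_add (Or.inr (EReal.coe_ne_bot _)) (Or.inr (EReal.coe_ne_top _))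
  have hzB : z ∈ Metric.closedBall z ρ := Metric.mem_closedBall_self (hη.trans hηρ).le
  obtain ⟨w, hwB, hwmin⟩ :=
    (hg.lowerSemicontinuousOn _).exists_isMinOn ⟨z, hzB⟩ (isCompact_closedBall z ρ)
  have hgw : g w ≤ a := by simpa [g, hfz] using hwmin hzB
  have hlocw : (a : EReal) ≤ f w + ((c * ‖w - z‖ : ℝ) : EReal) := by
    simpa [hfz, dist_eq_norm] using hloc w hwB
  obtain ⟨b, hb⟩ : ∃ b : ℝ, f w = b := by
    refine ⟨(f w).toReal, (EReal.coe_toReal ?_ ?_).symm⟩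
    · rintro hw
      rw [show g w = ⊤ by simp only [g, hw, EReal.top_add_coe]] at hgw
      exact EReal.coe_ne_top a (top_le_iff.1 hgw)
    · rintro hw
      simp [hw] at hlocw
  have hb₁ : b + K * ‖w - z‖ ^ 2 ≤ a := by
    simp only [g, hb] at hgw
    exact_mod_cast hgw
  have hb₂ : a ≤ b + c * ‖w - z‖ := by exact_mod_cast hb ▸ hlocw
  have hwz : ‖w - z‖ ≤ η := by
    by_contra! hlt
    have : c * ‖w - z‖ < K * ‖w - z‖ ^ 2 := by
      nlinarith [mul_pos (mul_pos hK (hη.trans hlt)) (sub_pos.2 hlt)]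
    linarith
  have hmin : IsLocalMin g w :=
    hwmin.isLocalMin (Metric.closedBall_mem_nhds_of_mem (by rw [mem_ball_iff_norm]; linarith))
  refine ⟨w, (2 * K) • (z - w), b, hb, by rwa [dist_eq_norm], ?_, ?_, ?_,
    regularSubgradient_of_isLocalMin_add_sq (hb ▸ EReal.coe_ne_top b) hmin⟩
  · nlinarith [norm_nonneg (w - z)]
  · nlinarith [norm_nonneg (w - z)]
  · rw [norm_smul, norm_sub_rev, Real.norm_of_nonneg (by positivity)]
    calc 2 * K * ‖w - z‖ ≤ 2 * K * η := by gcongr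
      _ = 2 * c := by rw [mul_assoc, hKη]

theorem frequently_regularSubgradient_of_slopeM_lt (hlsc : LowerSemicontinuous f)
    (hbot : ∀ z, f z ≠ ⊥) {z : EuclideanSpace ℝ (Fin n)} {c : ℝ}
    (h : slopeM f z < ENNReal.ofReal c) :
    ∃ᶠ w in attentiveNhds f z, ∃ y, RegularSubgradient f w y ∧ ‖y‖ < 2 * c := by
  have hz : f z ≠ ⊤ := fun hz => by simp [slopeM, hz] at h
  rw [slopeM, if_neg hz] at h
  obtain ⟨_, ⟨c', hc', rfl, hev⟩, hlt⟩ := sInf_lt_iff.1 h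
  have hc'c : c' < c := (ENNReal.ofReal_lt_ofReal_iff'.1 hlt).1
  obtain ⟨ρ, hρ, hball⟩ := Metric.eventually_nhds_iff_ball.1 hev
  have hloc : ∀ u ∈ Metric.closedBall z (ρ / 2), f z ≤ f u + ((c' * dist u z : ℝ) : EReal) :=
    fun u hu => hball u (Metric.closedBall_subset_ball (half_lt_self hρ) hu)
  obtain ⟨η, -, hη, hηlim⟩ := exists_seq_strictAnti_tendsto' (half_pos hρ)
  set a := (f z).toReal
  have hfz : f z = a := (EReal.coe_toReal hz (hbot z)).symm
  choose w y b hfw hwz hba hab hy hreg using fun k =>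
    exists_regularSubgradient_near hlsc hfz hc' (hη k).1 (hη k).2 hloc
  have hw_lim : Tendsto w atTop (𝓝 z) :=
    tendsto_iff_dist_tendsto_zero.2 (squeeze_zero (fun _ => dist_nonneg) hwz hηlim)
  have hb_lim : Tendsto b atTop (𝓝 a) := by
    refine tendsto_of_tendsto_of_tendsto_of_le_of_le ?_ tendsto_const_nhds
      (fun k => show a - c' * η k ≤ b k by linarith [hab k]) hba
    simpa using (hηlim.const_mul c').const_sub a
  have hfw_lim : Tendsto (fun k => f (w k)) atTop (𝓝 (f z)) := by
    simpa only [hfz, hfw] using EReal.tendsto_coe.2 hb_lim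
  exact (tendsto_attentiveNhds_iff.2 ⟨hw_lim, hfw_lim⟩).frequently
    (Frequently.of_forall fun k => ⟨y k, hreg k, by linarith [hy k]⟩)

theorem forall_frequently_slopeM_lt_iff (hlsc : LowerSemicontinuous f) (hbot : ∀ z, f z ≠ ⊥)
    {s : Set (EuclideanSpace ℝ (Fin n))} (hs : IsOpen s) {x : EuclideanSpace ℝ (Fin n)} :
    (∀ ε > 0, ∃ᶠ u in attentiveNhds f x ⊓ 𝓟 s, slopeM f u < ENNReal.ofReal ε) ↔
      ∀ ε > 0, ∃ᶠ u in attentiveNhds f x ⊓ 𝓟 s, ∃ y, y ∈ LimitingSubdiff f u ∧ ‖y‖ < ε := by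
  refine ⟨fun h ε hε => ?_, fun h ε hε => ?_⟩
  · refine (h (ε / 2) (half_pos hε)).attentiveNhds_inf_principal_of_forall hs fun u _ hu => ?_
    refine (frequently_regularSubgradient_of_slopeM_lt hlsc hbot hu).mono ?_
    rintro w ⟨y, hy, hyε⟩
    exact ⟨y, regularSubgradient_mem_limitingSubdiff hy, by linarith⟩
  · refine (h ε hε).attentiveNhds_inf_principal_of_forall hs fun u _ ⟨y, hy, hyε⟩ => ?_
    refine (frequently_regularSubgradient_of_mem_limitingSubdiff hy
      (Metric.isOpen_ball.mem_nhds (mem_ball_zero_iff.2 hyε))).mono ?_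
    rintro w ⟨y', hy', hreg⟩
    exact (slopeM_le_of_regularSubgradient hreg).trans_lt
      ((ENNReal.ofReal_lt_ofReal_iff hε).2 (mem_ball_zero_iff.1 hy'))

end Subgradients

theorem identifiable_iff_no_subgradient_sequence_general {n : ℕ}
    (f : EuclideanSpace ℝ (Fin n) → EReal)
    (hlsc : LowerSemicontinuous f) (hbot : ∀ z, f z ≠ ⊥)
    (xbar : EuclideanSpace ℝ (Fin n))
    (M : Set (EuclideanSpace ℝ (Fin n))) (hMcl : IsClosed M) (hmem : xbar ∈ M) :
    Identifiable f M xbar ↔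
      ¬ ∃ x y : ℕ → EuclideanSpace ℝ (Fin n),
        (∀ r, x r ∉ M) ∧ Tendsto x atTop (𝓝 xbar) ∧
        Tendsto (fun r => f (x r)) atTop (𝓝 (f xbar)) ∧
        (∀ r, y r ∈ LimitingSubdiff f (x r)) ∧
        Tendsto y atTop (𝓝 (0 : EuclideanSpace ℝ (Fin n))) := by
  have hmod : identModulus f M xbar = liminf (slopeM f) (attentiveNhds f xbar ⊓ 𝓟 Mᶜ) := by
    rw [identModulus, nhdsWithin, inf_right_comm]
    rfl
  rw [Identifiable, and_iff_right hMcl, and_iff_right hmem, pos_iff_ne_zero, hmod, Ne,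
    ENNReal.liminf_eq_zero_iff, forall_frequently_slopeM_lt_iff hlsc hbot hMcl.isOpen_compl]
  exact not_congr exists_seq_iff_forall_frequently_attentiveNhds.symm

/-- Identifiability via subgradients: in Euclidean space, a closed set `M` containing `xbar`
is identifiable there if and only if no sequence outside `M` converges to `xbar` with
`f`-values converging to `f(xbar)` and limiting subgradients converging to zero. -/
theorem identifiable_iff_no_subgradient_sequence {n : ℕ}
    (f : EuclideanSpace ℝ (Fin n) → EReal)
    (hproper : ∃ z, f z ≠ ⊤) (hlsc : LowerSemicontinuous f) (hbot : ∀ z, f z ≠ ⊥)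
    (xbar : EuclideanSpace ℝ (Fin n)) (hfin : f xbar ≠ ⊤)
    (M : Set (EuclideanSpace ℝ (Fin n))) (hMcl : IsClosed M) (hmem : xbar ∈ M) :
    Identifiable f M xbar ↔
      ¬ ∃ x y : ℕ → EuclideanSpace ℝ (Fin n),
        (∀ r, x r ∉ M) ∧ Tendsto x atTop (𝓝 xbar) ∧
        Tendsto (fun r => f (x r)) atTop (𝓝 (f xbar)) ∧
        (∀ r, y r ∈ LimitingSubdiff f (x r)) ∧
        Tendsto y atTop (𝓝 (0 : EuclideanSpace ℝ (Fin n))) :=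
  identifiable_iff_no_subgradient_sequence_general f hlsc hbot xbar M hMcl hmem
end

section
/- Let f : ℝ² → ℝ be defined by f(u,v) = √(u² + v⁴), where ℝ² carries the Euclidean metric. Then: (i) |∇f|(0,0) = 0 and |∇f|(u,v) = √((u² + 4v⁶)/(u² + v⁴)) for every (u,v) ≠ (0,0); (ii) for every α > 0 the set M_α = {(u,v) : |u| ≤ αv²} is identifiable for f at (0,0); (iii) the set M₀ = {(u,v) : u = 0} is not identifiable for f at (0,0); and consequently (iv) there exists no locally minimal identifiable set for f at (0,0), where an identifiable set M at (0,0) is called locally minimal if for every identifiable set M′ at (0,0) there is a neighborhood N of (0,0) with M ∩ N ⊆ M′. -/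
open Filter Topology
open scoped ENNReal NNReal

/-!
Away from the origin `f(u,v) = √(u² + v⁴)` is differentiable, and the slope of a differentiable
function is the norm of its derivative (the lower bound is Fermat's rule along rays); at the origin,
a minimizer, the slope is `0`. Off the cusp `{|u| ≤ αv²}` the slope is at least `α/√(1+α²)`, so
every such cusp with `α > 0` is identifiable. On the other hand the slope on `{|u| ≤ δv²}` is at
most `√(δ² + 4v²)`, so every identifiable set contains, near the origin, a cusp of some width
`δ > 0`. The line `{u = 0}` is the cusp of width `0`, hence not identifiable, and an identifiable
set containing the cusp of width `δ` is not locally inside the identifiable cusp of width `δ/2`.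
-/

section Slope

variable {X : Type*} [MetricSpace X]

lemma slopeM_coe (f : X → ℝ) (x : X) :
    slopeM (fun z => (f z : EReal)) x
      = sInf {δ : ℝ≥0∞ | ∃ c : ℝ, 0 < c ∧ δ = ENNReal.ofReal c ∧
          ∀ᶠ z in 𝓝 x, f x ≤ f z + c * dist z x} := by
  simp only [slopeM, EReal.coe_ne_top, if_false, ← EReal.coe_add, EReal.coe_le_coe_iff]

lemma slopeM_coe_le_of_eventually_le {f : X → ℝ} {x : X} {c : ℝ} (hc : 0 < c)
    (h : ∀ᶠ z in 𝓝 x, f x ≤ f z + c * dist z x) :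
    slopeM (fun z => (f z : EReal)) x ≤ ENNReal.ofReal c := by
  rw [slopeM_coe]
  exact sInf_le ⟨c, hc, rfl, h⟩

lemma IsLocalMin.slopeM_coe_eq_zero {f : X → ℝ} {x : X} (h : IsLocalMin f x) :
    slopeM (fun z => (f z : EReal)) x = 0 := by
  refine le_antisymm (ENNReal.le_of_forall_pos_le_add fun ε hε _ => ?_) zero_le
  rw [zero_add, ← ENNReal.ofReal_coe_nnreal]
  refine slopeM_coe_le_of_eventually_le hε (h.mono fun z hz => ?_)
  have : 0 ≤ (ε : ℝ) * dist z x := by positivity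
  linarith

end Slope

section Differentiable

variable {E : Type*} [NormedAddCommGroup E] [NormedSpace ℝ E] {f : E → ℝ} {L : E →L[ℝ] ℝ}
  {x : E}

lemma HasFDerivAt.slopeM_coe_le (h : HasFDerivAt f L x) :
    slopeM (fun z => (f z : EReal)) x ≤ ENNReal.ofReal ‖L‖ := by
  refine ENNReal.le_of_forall_pos_le_add fun ε hε _ => ?_
  rw [← ENNReal.ofReal_coe_nnreal, ← ENNReal.ofReal_add (norm_nonneg L) ε.coe_nonneg]
  refine slopeM_coe_le_of_eventually_le (by positivity) ?_
  filter_upwards [h.isLittleO.bound hε] with z hz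
  rw [dist_eq_norm]
  have hL : |L (z - x)| ≤ ‖L‖ * ‖z - x‖ := L.le_opNorm _
  have hz : |f z - f x - L (z - x)| ≤ ε * ‖z - x‖ := hz
  linarith [abs_le.mp hL, abs_le.mp hz]

/-- Fermat's rule: `t ↦ f (x + t • w) + t * c‖w‖` is minimal at `0` on `t ≥ 0`, so its derivative
`L w + c‖w‖` there is nonnegative. -/
lemma HasFDerivAt.neg_apply_le_of_eventually_le {c : ℝ} (h : HasFDerivAt f L x)
    (hc : ∀ᶠ z in 𝓝 x, f x ≤ f z + c * dist z x) (w : E) : -L w ≤ c * ‖w‖ := by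
  set φ : ℝ → ℝ := fun t => f (x + t • w) + t * (c * ‖w‖)
  have hφ : HasDerivAt φ (L w + c * ‖w‖) 0 := by
    have hray : HasDerivAt (fun t : ℝ => x + t • w) w 0 := by
      simpa using ((hasDerivAt_id (0 : ℝ)).smul_const w).const_add x
    have h' : HasFDerivAt f L (x + (0 : ℝ) • w) := by simpa using h
    exact (h'.comp_hasDerivAt 0 hray).add (hasDerivAt_mul_const (c * ‖w‖))
  have hmin : IsLocalMinOn φ (Set.Ici 0) 0 := by
    have hray : Tendsto (fun t : ℝ => x + t • w) (𝓝 0) (𝓝 x) := by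
      simpa using (Continuous.tendsto (by fun_prop) (0 : ℝ) : Tendsto (fun t : ℝ => x + t • w) _ _)
    filter_upwards [nhdsWithin_le_nhds (hray.eventually hc), self_mem_nhdsWithin]
      with t ht (ht0 : 0 ≤ t)
    simpa [φ, dist_eq_norm, norm_smul, abs_of_nonneg ht0, mul_comm, mul_left_comm] using ht
  have h1 : (1 : ℝ) ∈ posTangentConeAt (Set.Ici 0) 0 :=
    mem_posTangentConeAt_of_segment_subset (by simp [segment_eq_Icc, Set.Icc_subset_Ici_self])
  have := hmin.hasFDerivWithinAt_nonneg hφ.hasFDerivAt.hasFDerivWithinAt h1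
  simp only [ContinuousLinearMap.toSpanSingleton_apply, one_smul] at this
  linarith

lemma HasFDerivAt.norm_le_of_eventually_le {c : ℝ} (h : HasFDerivAt f L x) (hc0 : 0 ≤ c)
    (hc : ∀ᶠ z in 𝓝 x, f x ≤ f z + c * dist z x) : ‖L‖ ≤ c :=
  L.opNorm_le_bound hc0 fun w => by
    have h₁ := h.neg_apply_le_of_eventually_le hc w
    have h₂ := h.neg_apply_le_of_eventually_le hc (-w)
    rw [map_neg, neg_neg, norm_neg] at h₂
    exact abs_le.mpr ⟨by linarith, h₂⟩

lemma HasFDerivAt.slopeM_coe_eq (h : HasFDerivAt f L x) :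
    slopeM (fun z => (f z : EReal)) x = ENNReal.ofReal ‖L‖ := by
  refine le_antisymm h.slopeM_coe_le ?_
  rw [slopeM_coe]
  refine le_sInf ?_
  rintro _ ⟨c, hc, rfl, hev⟩
  exact ENNReal.ofReal_le_ofReal (h.norm_le_of_eventually_le hc.le hev)

end Differentiable

section Identifiable

variable {X : Type*} [MetricSpace X] {f : X → EReal} {M : Set X} {x₀ : X}

lemma identifiable_of_eventually_le_slopeM (hM : IsClosed M) (hx₀ : x₀ ∈ M) {c : ℝ≥0∞}
    (hc : 0 < c) (h : ∀ᶠ z in 𝓝[Mᶜ] x₀, c ≤ slopeM f z) : Identifiable f M x₀ :=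
  ⟨hM, hx₀, hc.trans_le <| le_liminf_of_le (by isBoundedDefault) (h.filter_mono inf_le_left)⟩

lemma Identifiable.exists_eventually_mem (hM : Identifiable f M x₀) (hf : ContinuousAt f x₀) :
    ∃ r : ℝ, 0 < r ∧ ∀ᶠ z in 𝓝 x₀, slopeM f z ≤ ENNReal.ofReal r → z ∈ M := by
  have hfilter : 𝓝[Mᶜ] x₀ ⊓ comap f (𝓝 (f x₀)) = 𝓝[Mᶜ] x₀ :=
    inf_eq_left.mpr (nhdsWithin_le_nhds.trans hf.tendsto.le_comap)
  obtain ⟨r, -, hr, hrM⟩ := ENNReal.lt_iff_exists_real_btwn.mp hM.2.2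
  rw [identModulus, hfilter] at hrM
  refine ⟨r, ENNReal.ofReal_pos.mp hr, ?_⟩
  filter_upwards [eventually_nhdsWithin_iff.mp (eventually_lt_of_lt_liminf hrM)] with z hz
  contrapose!
  exact hz

end Identifiable

local notation "ℝ²" => EuclideanSpace ℝ (Fin 2)

noncomputable def sqrtSqAddPowFour (q : ℝ²) : ℝ := Real.sqrt (q 0 ^ 2 + q 1 ^ 4)

def cusp (α : ℝ) : Set ℝ² := {q | |q 0| ≤ α * q 1 ^ 2}

lemma continuous_coe_sqrtSqAddPowFour : Continuous fun q => (sqrtSqAddPowFour q : EReal) :=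
  continuous_coe_real_ereal.comp (by unfold sqrtSqAddPowFour; fun_prop)

lemma sq_add_pow_four_pos {q : ℝ²} (hq : q ≠ 0) : 0 < q 0 ^ 2 + q 1 ^ 4 := by
  by_contra! h
  have h₀ : 0 ≤ q 0 ^ 2 := by positivity
  have h₁ : 0 ≤ q 1 ^ 4 := by positivity
  refine hq (PiLp.ext <| Fin.forall_fin_two.mpr ⟨?_, ?_⟩)
  · exact pow_eq_zero_iff two_ne_zero |>.mp (by linarith)
  · exact pow_eq_zero_iff four_ne_zero |>.mp (by linarith)

lemma hasFDerivAt_sqrtSqAddPowFour {p : ℝ²} (hp : p ≠ 0) :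
    HasFDerivAt sqrtSqAddPowFour
      (innerSL ℝ ((Real.sqrt (p 0 ^ 2 + p 1 ^ 4))⁻¹ • !₂[p 0, 2 * p 1 ^ 3])) p := by
  have hpos := sq_add_pow_four_pos hp
  have hsum := ((hasDerivAt_pow 2 (p 0)).comp_hasFDerivAt p
      (EuclideanSpace.proj (0 : Fin 2) : ℝ² →L[ℝ] ℝ).hasFDerivAt).add
    ((hasDerivAt_pow 4 (p 1)).comp_hasFDerivAt p
      (EuclideanSpace.proj (1 : Fin 2) : ℝ² →L[ℝ] ℝ).hasFDerivAt)
  refine ((Real.hasDerivAt_sqrt hpos.ne').comp_hasFDerivAt p hsum).congr_fderiv ?_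
  ext w
  simp [Fin.sum_univ_two, inner]
  field_simp
  ring

lemma slopeM_sqrtSqAddPowFour {p : ℝ²} (hp : p ≠ 0) :
    slopeM (fun q => (sqrtSqAddPowFour q : EReal)) p
      = ENNReal.ofReal (Real.sqrt ((p 0 ^ 2 + 4 * p 1 ^ 6) / (p 0 ^ 2 + p 1 ^ 4))) := by
  rw [(hasFDerivAt_sqrtSqAddPowFour hp).slopeM_coe_eq, innerSL_apply_norm, norm_smul, norm_inv,
    Real.norm_of_nonneg (Real.sqrt_nonneg _), Real.sqrt_div' _ (sq_add_pow_four_pos hp).le,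
    inv_mul_eq_div, EuclideanSpace.norm_eq, Fin.sum_univ_two]
  simp only [Matrix.cons_val_zero, Matrix.cons_val_one, Real.norm_eq_abs, sq_abs]
  ring_nf

lemma slopeM_sqrtSqAddPowFour_zero : slopeM (fun q => (sqrtSqAddPowFour q : EReal)) 0 = 0 :=
  IsLocalMin.slopeM_coe_eq_zero <| Eventually.of_forall fun q => by
    simp [sqrtSqAddPowFour]

lemma le_slopeM_of_notMem_cusp {α : ℝ} (hα : 0 < α) {p : ℝ²} (hp : p ∉ cusp α) :
    ENNReal.ofReal (Real.sqrt (α ^ 2 / (1 + α ^ 2)))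
      ≤ slopeM (fun q => (sqrtSqAddPowFour q : EReal)) p := by
  have hp' : α * p 1 ^ 2 < |p 0| := not_le.mp hp
  have hp0 : p ≠ 0 := by rintro rfl; simp at hp'
  have hsq : α ^ 2 * p 1 ^ 4 ≤ p 0 ^ 2 := by
    nlinarith [sq_abs (p 0), mul_nonneg hα.le (sq_nonneg (p 1))]
  rw [slopeM_sqrtSqAddPowFour hp0]
  gcongr ENNReal.ofReal (Real.sqrt ?_)
  rw [div_le_div_iff₀ (by positivity) (sq_add_pow_four_pos hp0)]
  nlinarith [sq_nonneg (p 0), sq_nonneg (p 1 ^ 3), sq_nonneg (α * p 1 ^ 3)]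

lemma slopeM_le_of_mem_cusp {δ : ℝ} {p : ℝ²} (hp : p ∈ cusp δ) :
    slopeM (fun q => (sqrtSqAddPowFour q : EReal)) p
      ≤ ENNReal.ofReal (Real.sqrt (δ ^ 2 + 4 * p 1 ^ 2)) := by
  rcases eq_or_ne p 0 with rfl | hp0
  · simp [slopeM_sqrtSqAddPowFour_zero]
  have hsq : p 0 ^ 2 ≤ δ ^ 2 * p 1 ^ 4 := by
    have : |p 0| ≤ δ * p 1 ^ 2 := hp
    nlinarith [sq_abs (p 0), abs_nonneg (p 0)]
  rw [slopeM_sqrtSqAddPowFour hp0]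
  gcongr ENNReal.ofReal (Real.sqrt ?_)
  rw [div_le_iff₀ (sq_add_pow_four_pos hp0)]
  nlinarith [sq_nonneg (p 0), sq_nonneg (p 1), sq_nonneg (δ * p 0)]

lemma identifiable_cusp {α : ℝ} (hα : 0 < α) :
    Identifiable (fun q => (sqrtSqAddPowFour q : EReal)) (cusp α) 0 := by
  refine identifiable_of_eventually_le_slopeM
    (isClosed_le (by fun_prop) (by fun_prop)) (by simp [cusp])
    ?_ (eventually_nhdsWithin_of_forall fun _ hq => le_slopeM_of_notMem_cusp hα hq)
  exact ENNReal.ofReal_pos.mpr (Real.sqrt_pos.mpr (by positivity))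

/-- On a cusp `{|u| ≤ δv²}` with `δ` and `v` small the slope is small. -/
lemma Identifiable.eventually_cusp_subset {M : Set ℝ²}
    (hM : Identifiable (fun q => (sqrtSqAddPowFour q : EReal)) M 0) :
    ∃ δ > 0, ∀ᶠ q in 𝓝 0, q ∈ cusp δ → q ∈ M := by
  obtain ⟨r, hr, hrM⟩ := hM.exists_eventually_mem continuous_coe_sqrtSqAddPowFour.continuousAt
  have hsmall : ∀ᶠ q : ℝ² in 𝓝 0, q 1 ^ 2 < r ^ 2 / 16 :=
    (Continuous.continuousAt (by fun_prop)).eventually_lt continuousAt_const (by simp; positivity)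
  refine ⟨r / 2, half_pos hr, ?_⟩
  filter_upwards [hrM, hsmall] with q hqM hq1 hq
  refine hqM ((slopeM_le_of_mem_cusp hq).trans (ENNReal.ofReal_le_ofReal ?_))
  rw [Real.sqrt_le_left hr.le]
  nlinarith

lemma not_eventually_cusp_subset {α δ : ℝ} (hδ : 0 ≤ δ) (hαδ : α < δ) :
    ¬ ∀ᶠ q in 𝓝 (0 : ℝ²), q ∈ cusp δ → q ∈ cusp α := by
  intro h
  have hcurve : Tendsto (fun v : ℝ => !₂[δ * v ^ 2, v]) (𝓝[≠] 0) (𝓝 0) := by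
    have h0 : (!₂[δ * 0 ^ 2, 0] : ℝ²) = 0 := by ext i; fin_cases i <;> simp
    exact tendsto_nhdsWithin_of_tendsto_nhds (h0 ▸ (Continuous.tendsto (by fun_prop) 0))
  obtain ⟨v, hv, hv0 : v ≠ 0⟩ := ((hcurve.eventually h).and self_mem_nhdsWithin).exists
  have hv2 : 0 < v ^ 2 := by positivity
  simp [cusp, abs_of_nonneg hδ] at hv
  linarith [mul_lt_mul_of_pos_right hαδ hv2]

lemma cusp_zero : cusp 0 = {q | q 0 = 0} := by
  simp [cusp]

/-- The example `f(u,v) = √(u² + v⁴)`: (i) the slope formula; (ii) each set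
`M_α = {|u| ≤ αv²}` (α > 0) is identifiable at `(0,0)`; (iii) `M₀ = {u = 0}` is not
identifiable at `(0,0)`; and hence (iv) there is no locally minimal identifiable set
at `(0,0)`. -/
theorem no_locally_minimal_identifiable_example :
    (slopeM (fun q : EuclideanSpace ℝ (Fin 2) =>
        ((Real.sqrt (q 0 ^ 2 + q 1 ^ 4) : ℝ) : EReal)) 0 = 0) ∧
    (∀ p : EuclideanSpace ℝ (Fin 2), p ≠ 0 →
      slopeM (fun q : EuclideanSpace ℝ (Fin 2) =>
          ((Real.sqrt (q 0 ^ 2 + q 1 ^ 4) : ℝ) : EReal)) p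
        = ENNReal.ofReal (Real.sqrt ((p 0 ^ 2 + 4 * p 1 ^ 6) / (p 0 ^ 2 + p 1 ^ 4)))) ∧
    (∀ α : ℝ, 0 < α →
      Identifiable (fun q : EuclideanSpace ℝ (Fin 2) =>
          ((Real.sqrt (q 0 ^ 2 + q 1 ^ 4) : ℝ) : EReal))
        {q : EuclideanSpace ℝ (Fin 2) | |q 0| ≤ α * q 1 ^ 2} 0) ∧
    ¬ Identifiable (fun q : EuclideanSpace ℝ (Fin 2) =>
        ((Real.sqrt (q 0 ^ 2 + q 1 ^ 4) : ℝ) : EReal))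
      {q : EuclideanSpace ℝ (Fin 2) | q 0 = 0} 0 ∧
    ¬ ∃ M : Set (EuclideanSpace ℝ (Fin 2)),
        Identifiable (fun q : EuclideanSpace ℝ (Fin 2) =>
          ((Real.sqrt (q 0 ^ 2 + q 1 ^ 4) : ℝ) : EReal)) M 0 ∧
        ∀ M' : Set (EuclideanSpace ℝ (Fin 2)),
          Identifiable (fun q : EuclideanSpace ℝ (Fin 2) =>
            ((Real.sqrt (q 0 ^ 2 + q 1 ^ 4) : ℝ) : EReal)) M' 0 →
          ∃ N ∈ 𝓝 (0 : EuclideanSpace ℝ (Fin 2)), M ∩ N ⊆ M' := by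
  refine ⟨slopeM_sqrtSqAddPowFour_zero, fun p hp => slopeM_sqrtSqAddPowFour hp,
    fun α hα => identifiable_cusp hα, ?_, ?_⟩
  · rw [← cusp_zero]
    intro hM
    obtain ⟨δ, hδ, hδM⟩ := hM.eventually_cusp_subset
    exact not_eventually_cusp_subset hδ.le hδ hδM
  · rintro ⟨M, hM, hmin⟩
    obtain ⟨δ, hδ, hδM⟩ := hM.eventually_cusp_subset
    obtain ⟨N, hN, hMN⟩ := hmin _ (identifiable_cusp (half_pos hδ))
    refine not_eventually_cusp_subset hδ.le (half_lt_self hδ) ?_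
    filter_upwards [hδM, hN] with q hqM hqN hq using hMN ⟨hqM hq, hqN⟩
end
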